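/- Let k ≥ 1 and set n = 2k. For every natural number q, the coefficient of t^q in the formal power series (1 - t^{4k}) · (1 - t^2)⁻¹ · (1 - t^{4k-2})⁻¹ ∈ ℚ⟦t⟧ equals: 2 if q is a positive multiple of 2(n-1) = 4k-2; 1 if q is even and q is not a positive multiple of 4k-2; and 0 if q is odd. -/

import Mathlib

/-!
Writing `u = t ^ 2` and `m = 2k - 1`, the series is `(1 - u ^ (m + 1)) / ((1 - u) (1 - u ^ m))`,
and the partial fraction decomposition `1 - u ^ (m + 1) = (1 - u ^ m) + u ^ m (1 - u)` turns it into
`1 / (1 - u) + u ^ m / (1 - u ^ m)`. The first summand contributes `1` in every even degree, the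
second one `1` in every positive degree divisible by `2m = 4k - 2`.
-/

open PowerSeries

namespace PowerSeries

section Ring

variable {R : Type*} [Ring R]

theorem mk_ite_dvd_mul_one_sub_X_pow {d : ℕ} (hd : d ≠ 0) :
    (mk fun n => if d ∣ n then 1 else 0 : R⟦X⟧) * (1 - X ^ d) = 1 := by
  ext n
  rw [mul_sub, mul_one, map_sub, coeff_mul_X_pow', coeff_mk, coeff_one]
  by_cases hn : d ≤ n
  · simp only [if_pos hn, coeff_mk, Nat.dvd_sub_iff_left hn dvd_rfl, sub_self,
      if_neg (by omega : n ≠ 0)]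
  · have hdvd : d ∣ n ↔ n = 0 := ⟨fun h => Nat.eq_zero_of_dvd_of_lt h (by omega), by simp_all⟩
    simp only [if_neg hn, sub_zero, hdvd]

end Ring

variable {K : Type*} [Field K]

theorem inv_one_sub_X_pow {d : ℕ} (hd : d ≠ 0) :
    (1 - X ^ d : K⟦X⟧)⁻¹ = mk fun n => if d ∣ n then 1 else 0 := by
  rw [inv_eq_iff_mul_eq_one (by simp [zero_pow hd]),
    mk_ite_dvd_mul_one_sub_X_pow hd]

theorem coeff_inv_one_sub_X_pow {d : ℕ} (hd : d ≠ 0) (n : ℕ) :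
    coeff n (1 - X ^ d : K⟦X⟧)⁻¹ = if d ∣ n then 1 else 0 := by
  rw [inv_one_sub_X_pow hd, coeff_mk]

theorem coeff_X_pow_mul_inv_one_sub_X_pow {d : ℕ} (hd : d ≠ 0) (n : ℕ) :
    coeff n (X ^ d * (1 - X ^ d)⁻¹ : K⟦X⟧) = if 0 < n ∧ d ∣ n then 1 else 0 := by
  rw [mul_comm, coeff_mul_X_pow', coeff_inv_one_sub_X_pow hd]
  by_cases hn : d ≤ n
  · simp only [if_pos hn, Nat.dvd_sub_iff_left hn dvd_rfl, (by omega : 0 < n), true_and]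
  · have : ¬ (0 < n ∧ d ∣ n) := fun ⟨h0, h⟩ => hn (Nat.le_of_dvd h0 h)
    rw [if_neg hn, if_neg this]

theorem one_sub_X_pow_add_mul_inv_mul_inv {a b : ℕ} (ha : a ≠ 0) (hb : b ≠ 0) :
    (1 - X ^ (a + b) : K⟦X⟧) * (1 - X ^ a)⁻¹ * (1 - X ^ b)⁻¹
      = (1 - X ^ a)⁻¹ + X ^ b * (1 - X ^ b)⁻¹ := by
  have hA := PowerSeries.mul_inv_cancel (1 - X ^ a : K⟦X⟧) (by simp [zero_pow ha])
  have hB := PowerSeries.mul_inv_cancel (1 - X ^ b : K⟦X⟧) (by simp [zero_pow hb])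
  linear_combination (1 - X ^ a : K⟦X⟧)⁻¹ * hB + X ^ b * (1 - X ^ b : K⟦X⟧)⁻¹ * hA

end PowerSeries

theorem betti_numbers_even (k : ℕ) (hk : 1 ≤ k) (q : ℕ) :
    ((0 < q ∧ (4 * k - 2) ∣ q) →
      (PowerSeries.coeff (R := ℚ) q)
        ((1 - (X : ℚ⟦X⟧) ^ (4 * k)) * (1 - (X : ℚ⟦X⟧) ^ 2)⁻¹ *
          (1 - (X : ℚ⟦X⟧) ^ (4 * k - 2))⁻¹) = 2) ∧
    ((Even q ∧ ¬(0 < q ∧ (4 * k - 2) ∣ q)) →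
      (PowerSeries.coeff (R := ℚ) q)
        ((1 - (X : ℚ⟦X⟧) ^ (4 * k)) * (1 - (X : ℚ⟦X⟧) ^ 2)⁻¹ *
          (1 - (X : ℚ⟦X⟧) ^ (4 * k - 2))⁻¹) = 1) ∧
    (Odd q →
      (PowerSeries.coeff (R := ℚ) q)
        ((1 - (X : ℚ⟦X⟧) ^ (4 * k)) * (1 - (X : ℚ⟦X⟧) ^ 2)⁻¹ *
          (1 - (X : ℚ⟦X⟧) ^ (4 * k - 2))⁻¹) = 0) := by
  set b := 4 * k - 2
  have hb0 : b ≠ 0 := by omega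
  have two_dvd_b : 2 ∣ b := by omega
  have hcoeff : coeff q ((1 - (X : ℚ⟦X⟧) ^ (4 * k)) * (1 - X ^ 2)⁻¹ * (1 - X ^ b)⁻¹)
      = (if 2 ∣ q then 1 else 0) + (if 0 < q ∧ b ∣ q then 1 else 0) := by
    rw [show 4 * k = 2 + b by omega, one_sub_X_pow_add_mul_inv_mul_inv two_ne_zero hb0,
      map_add, coeff_inv_one_sub_X_pow two_ne_zero, coeff_X_pow_mul_inv_one_sub_X_pow hb0]
  refine ⟨fun hdvd => ?_, fun ⟨heven, hndvd⟩ => ?_, fun hodd => ?_⟩ <;> rw [hcoeff]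
  · rw [if_pos (two_dvd_b.trans hdvd.2), if_pos hdvd]
    norm_num
  · rw [if_pos (even_iff_two_dvd.mp heven), if_neg hndvd, add_zero]
  · have hq : ¬ 2 ∣ q := by rwa [← even_iff_two_dvd, Nat.not_even_iff_odd]
    rw [if_neg hq, if_neg fun hdvd => hq (two_dvd_b.trans hdvd.2), add_zero]
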